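/- arXiv:2312.17600 — 7 statements merged into one kernel-verified Lean document; each statement's English description precedes it below -/
import Mathlib

section
/- Let H be a complex Hilbert space, let B be a bounded self-adjoint operator on H, and let S be a densely defined symmetric unbounded operator on H whose domain contains the range of B. Then: (i) the everywhere-defined composition x ↦ S(Bx) is bounded, i.e. there exists C ≥ 0 with ‖S(Bx)‖ ≤ C‖x‖ for all x ∈ H; and (ii) for all ψ in the domain of S and all ξ ∈ H one has ⟨B(Sψ), ξ⟩ = ⟨ψ, S(Bξ)⟩. -/
open scoped InnerProductSpace

/-- **Proposition A.2.(1) (Hilbert-space case).** Let `B` be a bounded self-adjoint operator on a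
complex Hilbert space `H` and let `S` be a densely defined symmetric unbounded operator whose
domain contains the range of `B`.  Then (i) the everywhere-defined composition `x ↦ S (B x)` is
bounded, and (ii) `⟪B (S ψ), ξ⟫ = ⟪ψ, S (B ξ)⟫` for all `ψ` in the domain of `S` and all `ξ`. -/
theorem symmetric_comp_bounded_selfAdjoint_isBounded_and_adjoint
    {H : Type*} [NormedAddCommGroup H] [InnerProductSpace ℂ H] [CompleteSpace H]
    (B : H →L[ℂ] H) (hB : IsSelfAdjoint B)
    (S : H →ₗ.[ℂ] H) (hdense : Dense (S.domain : Set H))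
    (hsymm : ∀ ψ φ : S.domain, ⟪S ψ, (φ : H)⟫_ℂ = ⟪(ψ : H), S φ⟫_ℂ)
    (hran : ∀ x : H, B x ∈ S.domain) :
    (∃ C : ℝ, 0 ≤ C ∧ ∀ x : H, ‖S ⟨B x, hran x⟩‖ ≤ C * ‖x‖) ∧
    (∀ ψ : S.domain, ∀ ξ : H, ⟪B (S ψ), ξ⟫_ℂ = ⟪(ψ : H), S ⟨B ξ, hran ξ⟩⟫_ℂ) := by
  have hBsym : ∀ x z : H, ⟪B x, z⟫_ℂ = ⟪x, B z⟫_ℂ := by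
    intro x z
    conv_lhs => rw [← hB.adjoint_eq]
    exact ContinuousLinearMap.adjoint_inner_left B z x
  -- the everywhere-defined composition as a linear map
  set T : H →ₗ[ℂ] H :=
    { toFun := fun x => S ⟨B x, hran x⟩
      map_add' := by
        intro x y
        have h : (⟨B (x + y), hran (x + y)⟩ : S.domain)
            = ⟨B x, hran x⟩ + ⟨B y, hran y⟩ := by
          apply Subtype.ext; simp
        simp only [h, S.map_add]
      map_smul' := by
        intro c x
        have h : (⟨B (c • x), hran (c • x)⟩ : S.domain)
            = c • (⟨B x, hran x⟩ : S.domain) := by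
          apply Subtype.ext; simp
        simp only [h, S.map_smul, RingHom.id_apply] } with hT
  have hTval : ∀ (x : H) (φ : S.domain), ⟪T x, (φ : H)⟫_ℂ = ⟪x, B (S φ)⟫_ℂ := by
    intro x φ
    have : ⟪T x, (φ : H)⟫_ℂ = ⟪(B x : H), S φ⟫_ℂ := hsymm ⟨B x, hran x⟩ φ
    rw [this, hBsym]
  -- a vector orthogonal to the dense domain vanishes
  have horth : ∀ y : H, (∀ φ : S.domain, ⟪y, (φ : H)⟫_ℂ = 0) → y = 0 := by
    intro y hy
    have hclosed : IsClosed {z : H | ⟪y, z⟫_ℂ = 0} :=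
      isClosed_eq (continuous_const.inner continuous_id) continuous_const
    have hsub : (S.domain : Set H) ⊆ {z : H | ⟪y, z⟫_ℂ = 0} := by
      rintro z hz; exact hy ⟨z, hz⟩
    have : (Set.univ : Set H) ⊆ {z : H | ⟪y, z⟫_ℂ = 0} := by
      have := closure_minimal hsub hclosed
      rw [hdense.closure_eq] at this
      exact this
    have hyy : ⟪y, y⟫_ℂ = 0 := this (Set.mem_univ y)
    exact inner_self_eq_zero.mp hyy
  -- the graph of T is closed
  have hgraph : IsClosed (T.graph : Set (H × H)) := by
    have heq : (T.graph : Set (H × H)) =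
        ⋂ φ : S.domain, {p : H × H | ⟪p.2, (φ : H)⟫_ℂ = ⟪p.1, B (S φ)⟫_ℂ} := by
      ext p
      simp only [SetLike.mem_coe, LinearMap.mem_graph_iff, Set.mem_iInter, Set.mem_setOf_eq]
      constructor
      · intro hp φ
        rw [hp]; exact hTval p.1 φ
      · intro hp
        have : ∀ φ : S.domain, ⟪p.2 - T p.1, (φ : H)⟫_ℂ = 0 := by
          intro φ
          rw [inner_sub_left, hp φ, hTval p.1 φ, sub_self]
        have := horth _ this
        exact sub_eq_zero.mp this
    rw [heq]
    exact isClosed_iInter fun φ =>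
      isClosed_eq ((continuous_snd.inner continuous_const))
        ((continuous_fst.inner continuous_const))
  have hTcont : Continuous T := T.continuous_of_isClosed_graph hgraph
  constructor
  · refine ⟨‖(⟨T, hTcont⟩ : H →L[ℂ] H)‖, norm_nonneg _, fun x => ?_⟩
    exact (⟨T, hTcont⟩ : H →L[ℂ] H).le_opNorm x
  · intro ψ ξ
    rw [hBsym]
    exact hsymm ψ ⟨B ξ, hran ξ⟩
end

section
/- Let A be a unital C*-algebra over ℂ, let s ∈ A be self-adjoint, and let t ∈ A be positive and invertible. Then ‖t^{-1/2} s t^{-1/2}‖ ≤ ‖s t^{-1}‖, where t^{1/2} denotes the positive square root of t obtained from the continuous functional calculus and t^{-1/2} = (t⁻¹)^{1/2}. -/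
open scoped ENNReal

/-- A self-adjoint element has norm equal to its spectral radius, which is a similarity
invariant bounded by the norm. -/
theorem IsSelfAdjoint.norm_le_norm_units_conjugate {A : Type*} [CStarAlgebra A] {a : A}
    (ha : IsSelfAdjoint a) (u : Aˣ) : ‖a‖ ≤ ‖(u : A) * a * ↑u⁻¹‖ := by
  nontriviality A
  have h : (‖a‖₊ : ℝ≥0∞) ≤ ‖(u : A) * a * ↑u⁻¹‖₊ :=
    calc (‖a‖₊ : ℝ≥0∞) = spectralRadius ℂ a := ha.spectralRadius_eq_nnnorm.symm
      _ = spectralRadius ℂ ((u : A) * a * ↑u⁻¹) := by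
        simp only [spectralRadius, spectrum.units_conjugate]
      _ ≤ ‖(u : A) * a * ↑u⁻¹‖₊ := spectrum.spectralRadius_le_nnnorm _
  exact_mod_cast h

/-- **Proposition A.2.(4) (bounded case).** Let `A` be a unital C*-algebra, `s` a self-adjoint
element, and `t` a positive invertible element.  Then
`‖t^{-1/2} * s * t^{-1/2}‖ ≤ ‖s * t⁻¹‖`. -/
theorem norm_sqrt_inv_mul_selfAdjoint_mul_sqrt_inv_le
    {A : Type*} [CStarAlgebra A] [PartialOrder A] [StarOrderedRing A]
    (s t : A) (hs : IsSelfAdjoint s) (ht : 0 ≤ t) (htu : IsUnit t) :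
    ‖CFC.sqrt (Ring.inverse t) * s * CFC.sqrt (Ring.inverse t)‖ ≤ ‖s * Ring.inverse t‖ := by
  obtain ⟨r, hr⟩ : IsUnit (CFC.sqrt t) := (CFC.isUnit_sqrt_iff t ht).mpr htu
  have hsqrt_inv : CFC.sqrt (Ring.inverse t) = ↑r⁻¹ := by
    rw [CFC.sqrt_ringInverse, ← hr, Ring.inverse_unit]
  have hinv : Ring.inverse t = ↑r⁻¹ * ↑r⁻¹ := by
    rw [← CFC.sqrt_mul_sqrt_self t ht, ← hr, ← Units.val_mul, Ring.inverse_unit, mul_inv_rev,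
      Units.val_mul]
  have hsa : IsSelfAdjoint ((r⁻¹ : Aˣ) * s * ↑r⁻¹) :=
    hs.conjugate_self (hsqrt_inv ▸ (CFC.sqrt_nonneg _).isSelfAdjoint)
  calc ‖CFC.sqrt (Ring.inverse t) * s * CFC.sqrt (Ring.inverse t)‖
      = ‖(r⁻¹ : Aˣ) * s * ↑r⁻¹‖ := by rw [hsqrt_inv]
    _ ≤ ‖(r : A) * (↑r⁻¹ * s * ↑r⁻¹) * ↑r⁻¹‖ := hsa.norm_le_norm_units_conjugate r
    _ = ‖s * Ring.inverse t‖ := by simp only [hinv, mul_assoc, Units.mul_inv_cancel_left]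
end

section
/- Let H be a complex Hilbert space and let T be a densely defined symmetric unbounded operator on H. Assume that for every μ > 0 there is a bounded operator B_μ on H with ‖B_μ‖ ≤ 1/μ such that B_μ x lies in the domain of T and T(B_μ x) − iμ·B_μ x = x for all x ∈ H, and B_μ(Tψ − iμψ) = ψ for all ψ in the domain of T (i.e. B_μ = (T − iμ)⁻¹). Let R be an unbounded operator on H whose domain contains the domain of T, and assume there is a compact bounded operator K on H with K x = R(B₁ x) for all x ∈ H (i.e. R(T − i)⁻¹ is compact). Then for every ε > 0 there exists C ≥ 0 such that ‖Rψ‖ ≤ ε‖Tψ‖ + C‖ψ‖ for all ψ in the domain of T. -/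
/-!
Write `A = B 1 = (T - i)⁻¹`. Every `ψ ∈ dom T` is `A x` with `x = Tψ - iψ`, so `Rψ = K x` and
`‖x‖ ≤ ‖Tψ‖ + ‖ψ‖`. Hence it suffices to show `‖K x‖ ≤ ε‖x‖ + C‖A x‖`, which holds for every compact
`K` and injective bounded `A`: otherwise there are unit vectors `uₙ` with `A uₙ → 0` and
`‖K uₙ‖ ≥ ε`; then `uₙ → 0` weakly (tested against the dense range of `A†`), and the compact `K`
turns this into `K uₙ → 0` in norm.
-/

open scoped InnerProductSpace
open Filter Topology

namespace ContinuousLinearMap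

section Normed

variable {𝕜 E F G : Type*} [RCLike 𝕜]
  [NormedAddCommGroup E] [NormedSpace 𝕜 E] [SeminormedAddCommGroup F] [NormedSpace 𝕜 F]
  [SeminormedAddCommGroup G] [NormedSpace 𝕜 G]

theorem norm_le_of_forall_norm_eq_one {K : E →L[𝕜] G} {A : E →L[𝕜] F} {ε C : ℝ}
    (h : ∀ x, ‖x‖ = 1 → ‖K x‖ ≤ ε + C * ‖A x‖) (x : E) :
    ‖K x‖ ≤ ε * ‖x‖ + C * ‖A x‖ := by
  rcases eq_or_ne x 0 with rfl | hx
  · simp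
  have hunit := h _ (norm_smul_inv_norm (𝕜 := 𝕜) hx)
  simp only [map_smul, norm_smul, norm_inv, RCLike.norm_ofReal, abs_norm] at hunit
  rw [← mul_le_mul_iff_right₀ (norm_pos_iff.mpr hx)] at hunit
  field_simp at hunit
  linarith

end Normed

variable {𝕜 E F G : Type*} [RCLike 𝕜]
  [NormedAddCommGroup E] [InnerProductSpace 𝕜 E] [CompleteSpace E]
  [NormedAddCommGroup F] [InnerProductSpace 𝕜 F] [CompleteSpace F]
  [NormedAddCommGroup G] [InnerProductSpace 𝕜 G] [CompleteSpace G]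

theorem denseRange_adjoint_of_injective {A : E →L[𝕜] F} (hA : Function.Injective A) :
    DenseRange (adjoint A) := by
  have h := A.orthogonal_ker
  rw [LinearMap.ker_eq_bot.mpr hA, Submodule.bot_orthogonal_eq_top] at h
  exact (Submodule.dense_iff_topologicalClosure_eq_top.mpr h.symm :)

theorem tendsto_inner_zero_of_tendsto_apply_zero {ι : Type*} {l : Filter ι}
    {A : E →L[𝕜] F} (hA : Function.Injective A) {u : ι → E} {M : ℝ} (hu : ∀ i, ‖u i‖ ≤ M)
    (hAu : Tendsto (fun i ↦ A (u i)) l (𝓝 0)) (e : E) :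
    Tendsto (fun i ↦ ⟪u i, e⟫_𝕜) l (𝓝 0) := by
  have hequi : Equicontinuous fun i ↦ (innerSL 𝕜 (u i) : E → 𝕜) :=
    ((NormedSpace.equicontinuous_TFAE fun i ↦ innerSL 𝕜 (u i)).out 5 1).mp
      (show ∃ C, ∀ i, ‖innerSL 𝕜 (u i)‖ ≤ C from
        ⟨M, fun i ↦ (innerSL_apply_norm 𝕜 (u i)).trans_le (hu i)⟩)
  have hclosed : IsClosed {e : E | Tendsto (fun i ↦ ⟪u i, e⟫_𝕜) l (𝓝 0)} :=
    hequi.isClosed_setOfPred_tendsto (f := fun _ ↦ 0) continuous_const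
  have hrange : Set.range (adjoint A) ⊆ {e : E | Tendsto (fun i ↦ ⟪u i, e⟫_𝕜) l (𝓝 0)} := by
    rintro _ ⟨v, rfl⟩
    simpa only [Set.mem_ofPred_eq, adjoint_inner_right, inner_zero_left] using
      hAu.inner (tendsto_const_nhds (x := v))
  exact hclosed.closure_subset_iff.mpr hrange (denseRange_adjoint_of_injective hA e)

theorem _root_.IsCompactOperator.tendsto_zero_of_tendsto_apply_zero {K : E →L[𝕜] G}
    (hK : IsCompactOperator K) {A : E →L[𝕜] F} (hA : Function.Injective A) {u : ℕ → E} {M : ℝ}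
    (hu : ∀ n, ‖u n‖ ≤ M) (hAu : Tendsto (fun n ↦ A (u n)) atTop (𝓝 0)) :
    Tendsto (fun n ↦ K (u n)) atTop (𝓝 0) := by
  refine tendsto_of_subseq_tendsto fun ns hns ↦ ?_
  have hmem : ∀ n, K (u (ns n)) ∈ closure (K '' Metric.closedBall 0 M) := fun n ↦
    subset_closure ⟨u (ns n), mem_closedBall_zero_iff.mpr (hu (ns n)), rfl⟩
  obtain ⟨y, -, φ, hφ, hy⟩ := (hK.isCompact_closure_image_closedBall M).tendsto_subseq hmem
  suffices y = 0 from ⟨φ, this ▸ hy⟩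
  refine ext_inner_right 𝕜 fun e ↦ ?_
  have hweak : Tendsto (fun n ↦ ⟪K (u (ns (φ n))), e⟫_𝕜) atTop (𝓝 0) := by
    simp_rw [← adjoint_inner_right]
    exact tendsto_inner_zero_of_tendsto_apply_zero hA (fun n ↦ hu _)
      (hAu.comp (hns.comp hφ.tendsto_atTop)) _
  rw [inner_zero_left]
  exact tendsto_nhds_unique (hy.inner tendsto_const_nhds) hweak

theorem _root_.IsCompactOperator.exists_norm_le_mul_norm_add_mul_norm {K : E →L[𝕜] G}
    (hK : IsCompactOperator K) {A : E →L[𝕜] F} (hA : Function.Injective A) {ε : ℝ}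
    (hε : 0 < ε) : ∃ C, 0 ≤ C ∧ ∀ x, ‖K x‖ ≤ ε * ‖x‖ + C * ‖A x‖ := by
  suffices ∃ C, 0 ≤ C ∧ ∀ x, ‖x‖ = 1 → ‖K x‖ ≤ ε + C * ‖A x‖ from
    let ⟨C, hC, h⟩ := this; ⟨C, hC, norm_le_of_forall_norm_eq_one h⟩
  by_contra! hcon
  choose u hu hKu using fun n : ℕ ↦ hcon (n + 1) n.cast_add_one_pos.le
  have hAu : Tendsto (fun n ↦ A (u n)) atTop (𝓝 0) := by
    refine squeeze_zero_norm (fun n ↦ ?_)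
      (by simpa using tendsto_one_div_add_atTop_nhds_zero_nat.const_mul ‖K‖)
    rw [← div_eq_mul_inv, le_div_iff₀ n.cast_add_one_pos]
    linarith [hKu n, K.le_opNorm_of_le (hu n).le]
  have hlim := (hK.tendsto_zero_of_tendsto_apply_zero hA (fun n ↦ (hu n).le) hAu).norm
  rw [norm_zero] at hlim
  obtain ⟨n, hn⟩ := (hlim.eventually (gt_mem_nhds hε)).exists
  linarith [hKu n, mul_nonneg n.cast_add_one_pos.le (norm_nonneg (A (u n)))]

end ContinuousLinearMap

theorem rel_compact_implies_rel_bounded_small_bound_general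
    {H : Type*} [NormedAddCommGroup H] [InnerProductSpace ℂ H] [CompleteSpace H]
    (T R : H →ₗ.[ℂ] H)
    (B : ℝ → H →L[ℂ] H)
    (hBmem : ∀ μ : ℝ, 0 < μ → ∀ x : H, B μ x ∈ T.domain)
    (hBright : ∀ (μ : ℝ) (hμ : 0 < μ) (x : H),
      T ⟨B μ x, hBmem μ hμ x⟩ - (Complex.I * (μ : ℂ)) • B μ x = x)
    (hBleft : ∀ (μ : ℝ), 0 < μ → ∀ ψ : T.domain,
      B μ (T ψ - (Complex.I * (μ : ℂ)) • (ψ : H)) = (ψ : H))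
    (hdom : T.domain ≤ R.domain)
    (K : H →L[ℂ] H) (hK : IsCompactOperator K)
    (hKR : ∀ x : H, K x = R ⟨B 1 x, hdom (hBmem 1 one_pos x)⟩) :
    ∀ ε : ℝ, 0 < ε → ∃ C : ℝ, 0 ≤ C ∧ ∀ ψ : T.domain,
      ‖R ⟨(ψ : H), hdom ψ.2⟩‖ ≤ ε * ‖T ψ‖ + C * ‖(ψ : H)‖ := by
  have hinj : Function.Injective (B 1) := fun x y hxy ↦ by
    have hBxy : (⟨B 1 x, hBmem 1 one_pos x⟩ : T.domain) = ⟨B 1 y, hBmem 1 one_pos y⟩ :=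
      Subtype.ext hxy
    rw [← hBright 1 one_pos x, ← hBright 1 one_pos y, hBxy, hxy]
  intro ε hε
  obtain ⟨C, hC, hKB⟩ := hK.exists_norm_le_mul_norm_add_mul_norm hinj hε
  refine ⟨ε + C, by positivity, fun ψ ↦ ?_⟩
  set x := T ψ - (Complex.I * ((1 : ℝ) : ℂ)) • (ψ : H)
  have hBx : B 1 x = ψ := hBleft 1 one_pos ψ
  have hKx : K x = R ⟨ψ, hdom ψ.2⟩ := by rw [hKR x]; exact congrArg R (Subtype.ext hBx)
  have hx : ‖x‖ ≤ ‖T ψ‖ + ‖(ψ : H)‖ := (norm_sub_le _ _).trans_eq (by simp [norm_smul])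
  calc ‖R ⟨ψ, hdom ψ.2⟩‖ ≤ ε * ‖x‖ + C * ‖(ψ : H)‖ := by simpa only [hKx, hBx] using hKB x
    _ ≤ ε * (‖T ψ‖ + ‖(ψ : H)‖) + C * ‖(ψ : H)‖ := by gcongr
    _ = ε * ‖T ψ‖ + (ε + C) * ‖(ψ : H)‖ := by ring

/-- **Proposition A.6 (Hilbert-space case).** Let `T` be a densely defined symmetric operator on a
complex Hilbert space admitting resolvents `B μ = (T − iμ)⁻¹` with `‖B μ‖ ≤ 1/μ` for all `μ > 0`,
and let `R` be an operator with `dom T ⊆ dom R` such that `R (T − i)⁻¹` is compact.  Then `R` is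
relatively `T`-bounded with arbitrarily small relative bound: for every `ε > 0` there exists
`C ≥ 0` with `‖R ψ‖ ≤ ε ‖T ψ‖ + C ‖ψ‖` for all `ψ` in the domain of `T`. -/
theorem rel_compact_implies_rel_bounded_small_bound
    {H : Type*} [NormedAddCommGroup H] [InnerProductSpace ℂ H] [CompleteSpace H]
    (T R : H →ₗ.[ℂ] H)
    (hdense : Dense (T.domain : Set H))
    (hsymm : ∀ ψ φ : T.domain, ⟪T ψ, (φ : H)⟫_ℂ = ⟪(ψ : H), T φ⟫_ℂ)
    (B : ℝ → H →L[ℂ] H)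
    (hBnorm : ∀ μ : ℝ, 0 < μ → ‖B μ‖ ≤ 1 / μ)
    (hBmem : ∀ μ : ℝ, 0 < μ → ∀ x : H, B μ x ∈ T.domain)
    (hBright : ∀ (μ : ℝ) (hμ : 0 < μ) (x : H),
      T ⟨B μ x, hBmem μ hμ x⟩ - (Complex.I * (μ : ℂ)) • B μ x = x)
    (hBleft : ∀ (μ : ℝ), 0 < μ → ∀ ψ : T.domain,
      B μ (T ψ - (Complex.I * (μ : ℂ)) • (ψ : H)) = (ψ : H))
    (hdom : T.domain ≤ R.domain)
    (K : H →L[ℂ] H) (hK : IsCompactOperator K)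
    (hKR : ∀ x : H, K x = R ⟨B 1 x, hdom (hBmem 1 one_pos x)⟩) :
    ∀ ε : ℝ, 0 < ε → ∃ C : ℝ, 0 ≤ C ∧ ∀ ψ : T.domain,
      ‖R ⟨(ψ : H), hdom ψ.2⟩‖ ≤ ε * ‖T ψ‖ + C * ‖(ψ : H)‖ :=
  rel_compact_implies_rel_bounded_small_bound_general T R B hBmem hBright hBleft hdom K hK hKR
end

section
/- Let H be a complex Hilbert space and let T be a densely defined self-adjoint unbounded operator on H (T equals its adjoint as a LinearPMap). Assume that for every μ > 0 there is a bounded operator B_μ on H with ‖B_μ‖ ≤ 1/μ such that B_μ x lies in the domain of T and T(B_μ x) − iμ·B_μ x = x for all x ∈ H, and B_μ(Tψ − iμψ) = ψ for all ψ in the domain of T. Let R be a symmetric unbounded operator on H whose domain contains the domain of T, and assume there is a compact bounded operator K on H with K x = R(B₁ x) for all x ∈ H. Then the sum T + R (the LinearPMap with domain dom T ⊓ dom R = dom T, sending ψ ↦ Tψ + Rψ) is self-adjoint: (T + R).adjoint = T + R. -/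
/-!
A densely defined symmetric operator `S` for which `S - z` and `S - z̄` are both onto is
self-adjoint. For `S = T + R` and `w = ±iμ`, the resolvent identity `(T - i)⁻¹ C = (T - w)⁻¹` with
`C = 1 + (w - i)(T - w)⁻¹` gives `(S - w)(T - w)⁻¹ = 1 + K C`. On `dom T` one has
`C* = (T - w̄)⁻¹ (T + i)`, so `C* → 0` strongly as `μ → ∞` while `‖C‖` stays bounded; composing with
the compact operator `K* K` makes this a norm limit, and `‖K C‖² = ‖C* K* K C‖ → 0`. Hence `1 + K C`
is invertible for large `μ`, and `S ∓ iμ` is onto.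
-/

open scoped InnerProductSpace ComplexConjugate
open Filter Topology Metric Set

theorem tendsto_mul_of_tendsto_star_mul_star_mul_self {R ι : Type*} [NonUnitalNormedRing R]
    [StarRing R] [CStarRing R] {l : Filter ι} {k : R} {c : ι → R}
    (h : Tendsto (fun i => star (c i) * (star k * k)) l (𝓝 0))
    (hc : IsBoundedUnder (· ≤ ·) l fun i => ‖c i‖) :
    Tendsto (fun i => k * c i) l (𝓝 0) := by
  have hsq : Tendsto (fun i => ‖k * c i‖ * ‖k * c i‖) l (𝓝 0) := by
    simpa [← CStarRing.norm_star_mul_self, star_mul, mul_assoc] using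
      (h.zero_mul_isBoundedUnder_le hc).norm
  rw [tendsto_zero_iff_norm_tendsto_zero]
  simpa [Real.sqrt_mul_self (norm_nonneg _)] using hsq.sqrt

section CompactOperator

variable {𝕜 E F G ι : Type*} [RCLike 𝕜] [NormedAddCommGroup E] [NormedSpace 𝕜 E]
  [NormedAddCommGroup F] [NormedSpace 𝕜 F] [NormedAddCommGroup G] [NormedSpace 𝕜 G]
  {l : Filter ι}

theorem IsCompactOperator.tendsto_comp_of_tendsto_on_dense {K : E →L[𝕜] F}
    (hK : IsCompactOperator K) {A : ι → F →L[𝕜] G}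
    (hbdd : IsBoundedUnder (· ≤ ·) l fun i => ‖A i‖) {D : Set F} (hD : Dense D)
    (hAD : ∀ d ∈ D, Tendsto (fun i => A i d) l (𝓝 0)) :
    Tendsto (fun i => A i ∘L K) l (𝓝 0) := by
  obtain ⟨M, hM⟩ := hbdd
  obtain ⟨S, hS, hKS⟩ := hK.image_closedBall_subset_compact (1 : ℝ)
  refine Metric.tendsto_nhds.2 fun ε hε => ?_
  set δ := ε / (4 * (|M| + 1))
  have hδ : 0 < δ := by positivity
  have hMδ : M * δ ≤ ε / 4 := calc
    M * δ ≤ (|M| + 1) * δ := by gcongr; linarith [le_abs_self M]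
    _ = ε / 4 := by simp only [δ]; field_simp
  obtain ⟨t, htD, htfin, hcover⟩ := hS.elim_finite_subcover_image (b := D)
    (c := fun d => ball d δ) (fun _ _ => isOpen_ball) fun y _ => by
      obtain ⟨d, hd, hyd⟩ := hD.exists_dist_lt y hδ
      exact mem_iUnion₂.2 ⟨d, hd, hyd⟩
  have hnear : ∀ᶠ i in l, ∀ d ∈ t, ‖A i d‖ < ε / 2 :=
    (eventually_all_finite htfin).2 fun d hd => by
      simpa using (hAD d (htD hd)).eventually (ball_mem_nhds 0 (half_pos hε))
  filter_upwards [hM, hnear] with i hMi hi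
  rw [dist_zero_right]
  refine (ContinuousLinearMap.opNorm_le_of_unit_norm (C := 3 * ε / 4) (by positivity)
    fun x hx => ?_).trans_lt (by linarith)
  obtain ⟨d, hd, hxd⟩ := mem_iUnion₂.1 (hcover (hKS ⟨x, by simp [hx], rfl⟩))
  calc ‖(A i ∘L K) x‖ = ‖A i (K x - d) + A i d‖ := by simp
    _ ≤ ‖A i‖ * ‖K x - d‖ + ‖A i d‖ := norm_add_le_of_le ((A i).le_opNorm _) le_rfl
    _ ≤ M * δ + ε / 2 := by
      gcongr
      · exact (norm_nonneg _).trans hMi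
      · exact hMi
      · exact (mem_ball_iff_norm.1 hxd).le
      · exact (hi d hd).le
    _ ≤ 3 * ε / 4 := by linarith

end CompactOperator

namespace LinearPMap

variable {𝕜 E F : Type*} [RCLike 𝕜] [NormedAddCommGroup E] [InnerProductSpace 𝕜 E]
  [NormedAddCommGroup F] [InnerProductSpace 𝕜 F]

theorem IsFormalAdjoint.add {S T : E →ₗ.[𝕜] F} {S' T' : F →ₗ.[𝕜] E}
    (hS : S.IsFormalAdjoint S') (hT : T.IsFormalAdjoint T') :
    (S + T).IsFormalAdjoint (S' + T') := fun x y => by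
  simpa only [add_apply, inner_add_left, inner_add_right]
    using congrArg₂ (· + ·) (hS ⟨x, x.2.1⟩ ⟨y, y.2.1⟩) (hT ⟨x, x.2.2⟩ ⟨y, y.2.2⟩)

theorem IsFormalAdjoint.inner_sub_smul {S S' : E →ₗ.[𝕜] E} (h : S.IsFormalAdjoint S') (z : 𝕜)
    (φ : S.domain) (y : S'.domain) :
    ⟪S φ - z • (φ : E), (y : E)⟫_𝕜 = ⟪(φ : E), S' y - conj z • (y : E)⟫_𝕜 := by
  rw [inner_sub_left, inner_sub_right, inner_smul_left, inner_smul_right, h φ y]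

theorem adjoint_eq_self_of_forall_exists_sub_smul_eq [CompleteSpace E] {S : E →ₗ.[𝕜] E}
    (hS : Dense (S.domain : Set E)) (hsymm : S.IsFormalAdjoint S) (z : 𝕜)
    (hz : ∀ x, ∃ φ : S.domain, S φ - z • (φ : E) = x)
    (hz' : ∀ x, ∃ ψ : S.domain, S ψ - conj z • (ψ : E) = x) :
    S.adjoint = S := by
  have hle : S ≤ S.adjoint := hsymm.le_adjoint hS
  refine (eq_of_le_of_domain_eq hle (le_antisymm hle.1 fun y hy => ?_)).symm
  obtain ⟨ψ, hψ⟩ := hz' (S.adjoint ⟨y, hy⟩ - conj z • y)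
  suffices y = ψ from this ▸ ψ.2
  refine ext_inner_left 𝕜 fun x => ?_
  obtain ⟨φ, rfl⟩ := hz x
  rw [(adjoint_isFormalAdjoint hS).symm.inner_sub_smul z φ ⟨y, hy⟩, hsymm.inner_sub_smul z φ ψ, hψ]

structure IsResolvent (T : E →ₗ.[𝕜] E) (z : 𝕜) (B : E →L[𝕜] E) : Prop where
  mem_domain : ∀ x, B x ∈ T.domain
  apply_sub_smul : ∀ x, T ⟨B x, mem_domain x⟩ - z • B x = x
  sub_smul_apply : ∀ ψ : T.domain, B (T ψ - z • (ψ : E)) = ψ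

variable {T : E →ₗ.[𝕜] E} {z w : 𝕜} {A B : E →L[𝕜] E}

namespace IsResolvent

theorem one_add_smul_apply (hA : T.IsResolvent w A) (z : 𝕜) (ψ : T.domain) :
    (1 + (w - z) • A) ψ = A (T ψ - z • (ψ : E)) := by
  have : T ψ - z • (ψ : E) = (T ψ - w • (ψ : E)) + (w - z) • (ψ : E) := by module
  rw [this, A.map_add, hA.sub_smul_apply, A.map_smul]
  rfl

theorem mul_one_add_smul (hB : T.IsResolvent z B) (hA : T.IsResolvent w A) :
    B * (1 + (w - z) • A) = A := by
  ext x
  have : x + (w - z) • A x = T ⟨A x, hA.mem_domain x⟩ - z • A x := by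
    linear_combination (norm := module) -(hA.apply_sub_smul x)
  simpa [this] using hB.sub_smul_apply ⟨A x, hA.mem_domain x⟩

theorem exists_add_apply_sub_smul_eq {R : E →ₗ.[𝕜] E}
    (hB : T.IsResolvent z B) (hA : T.IsResolvent w A) (hdom : T.domain ≤ R.domain) {K : E →L[𝕜] E}
    (hKR : ∀ x, K x = R ⟨B x, hdom (hB.mem_domain x)⟩)
    (hunit : IsUnit (1 + K * (1 + (w - z) • A))) (x : E) :
    ∃ ψ : (T + R).domain, (T + R) ψ - w • (ψ : E) = x := by
  obtain ⟨u, hu⟩ := hunit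
  set y := (↑u⁻¹ : E →L[𝕜] E) x
  have hy : y + K ((1 + (w - z) • A) y) = x := by
    change (1 + K * (1 + (w - z) • A)) y = x
    rw [← hu, ← mul_apply_eq_comp, u.mul_inv, one_apply_eq_self]
  have hRA : R ⟨A y, hdom (hA.mem_domain y)⟩ = K ((1 + (w - z) • A) y) := by
    rw [hKR]
    congr 1
    exact Subtype.ext congr($(hB.mul_one_add_smul hA) y).symm
  refine ⟨⟨A y, hA.mem_domain y, hdom (hA.mem_domain y)⟩, ?_⟩
  calc (T + R) _ - w • A y = (T ⟨A y, hA.mem_domain y⟩ - w • A y) + R ⟨A y, _⟩ := by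
        rw [add_apply]; abel
    _ = x := by rw [hA.apply_sub_smul, hRA, hy]

end IsResolvent

end LinearPMap

namespace IsSelfAdjoint

variable {𝕜 E : Type*} [RCLike 𝕜] [NormedAddCommGroup E] [InnerProductSpace 𝕜 E] [CompleteSpace E]
  {T : E →ₗ.[𝕜] E}

open LinearPMap

theorem isFormalAdjoint_self (hT : IsSelfAdjoint T) : T.IsFormalAdjoint T := by
  have h := adjoint_isFormalAdjoint hT.dense_domain
  rwa [isSelfAdjoint_def.mp hT] at h

theorem isResolvent_star {z : 𝕜} {B : E →L[𝕜] E} (hT : IsSelfAdjoint T) (hB : T.IsResolvent z B) :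
    T.IsResolvent (conj z) (star B) := by
  have hsymm := hT.isFormalAdjoint_self
  have hTle : T.adjoint ≤ T := (isSelfAdjoint_def.mp hT).le
  have hinner : ∀ x (φ : T.domain), ⟪x + conj z • star B x, (φ : E)⟫_𝕜 = ⟪star B x, T φ⟫_𝕜 := by
    intro x φ
    have hBT : B (T φ) = φ + z • B φ := by
      have h := hB.sub_smul_apply φ
      rw [B.map_sub, B.map_smul] at h
      linear_combination (norm := module) h
    rw [ContinuousLinearMap.star_eq_adjoint, ContinuousLinearMap.adjoint_inner_left, hBT,
      inner_add_left, inner_add_right, inner_smul_left, inner_smul_right, RCLike.conj_conj,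
      ContinuousLinearMap.adjoint_inner_left]
  have hmem : ∀ x, star B x ∈ T.adjoint.domain := fun x =>
    mem_adjoint_domain_of_exists _ ⟨_, hinner x⟩
  refine ⟨fun x => hTle.1 (hmem x), fun x => ?_, fun ψ => ?_⟩
  · rw [← hTle.2 (x := ⟨_, hmem x⟩) rfl, adjoint_apply_eq hT.dense_domain _ (hinner x),
      add_sub_cancel_right]
  · refine ext_inner_right 𝕜 fun v => ?_
    rw [ContinuousLinearMap.star_eq_adjoint, ContinuousLinearMap.adjoint_inner_left,
      hsymm.inner_sub_smul _ ψ ⟨B v, hB.mem_domain v⟩, RCLike.conj_conj, hB.apply_sub_smul]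

end IsSelfAdjoint

namespace LinearPMap

variable {𝕜 E ι : Type*} [RCLike 𝕜] [NormedAddCommGroup E] [InnerProductSpace 𝕜 E]
  [CompleteSpace E] {T : E →ₗ.[𝕜] E} {l : Filter ι}

theorem tendsto_mul_one_add_smul_of_isResolvent (hT : IsSelfAdjoint T) {K : E →L[𝕜] E}
    (hK : IsCompactOperator K) (z : 𝕜) {w : ι → 𝕜} {A : ι → E →L[𝕜] E}
    (hA : ∀ᶠ i in l, T.IsResolvent (w i) (A i))
    (hbdd : IsBoundedUnder (· ≤ ·) l fun i => ‖w i - z‖ * ‖A i‖)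
    (hA0 : Tendsto (fun i => ‖A i‖) l (𝓝 0)) :
    Tendsto (fun i => K * (1 + (w i - z) • A i)) l (𝓝 0) := by
  set C := fun i => 1 + (w i - z) • A i
  have hCbdd : IsBoundedUnder (· ≤ ·) l fun i => ‖C i‖ := by
    obtain ⟨M, hM⟩ := hbdd
    refine ⟨‖(1 : E →L[𝕜] E)‖ + M, eventually_map.2 ?_⟩
    filter_upwards [eventually_map.1 hM] with i hi
    exact (norm_add_le _ _).trans (by rw [norm_smul]; linarith)
  have hstar : ∀ ψ ∈ T.domain, Tendsto (fun i => star (C i) ψ) l (𝓝 0) := by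
    intro ψ hψ
    set v := T ⟨ψ, hψ⟩ - conj z • ψ
    have hC : ∀ᶠ i in l, star (A i) v = star (C i) ψ := by
      filter_upwards [hA] with i hi
      rw [← (hT.isResolvent_star hi).one_add_smul_apply (conj z) ⟨ψ, hψ⟩]
      simp [C, star_add, star_smul]
    refine (tendsto_congr' hC).1
      (squeeze_zero_norm (fun i => ?_) (by simpa using hA0.mul_const ‖v‖))
    exact ((star (A i)).le_opNorm v).trans_eq (congrArg (· * ‖v‖) (norm_star (A i)))
  have hG : IsCompactOperator (star K * K) := hK.clm_comp (star K)
  refine tendsto_mul_of_tendsto_star_mul_star_mul_self ?_ hCbdd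
  exact hG.tendsto_comp_of_tendsto_on_dense (by simpa only [norm_star] using hCbdd)
    hT.dense_domain hstar

theorem eventually_isUnit_one_add_mul_one_add_smul_of_isResolvent (hT : IsSelfAdjoint T)
    {K : E →L[𝕜] E} (hK : IsCompactOperator K) (z : 𝕜) {w : ℝ → 𝕜} {A : ℝ → E →L[𝕜] E}
    (hA : ∀ ν > 0, T.IsResolvent (w ν) (A ν)) (hw : ∀ ν, ‖w ν‖ = |ν|)
    (hAnorm : ∀ ν > 0, ‖A ν‖ ≤ 1 / ν) :
    ∀ᶠ ν in atTop, IsUnit (1 + K * (1 + (w ν - z) • A ν)) := by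
  suffices Tendsto (fun ν => K * (1 + (w ν - z) • A ν)) atTop (𝓝 0) from
    (this.const_add 1).eventually (Units.isOpen.mem_nhds (by simp))
  have hA0 : Tendsto (fun ν => ‖A ν‖) atTop (𝓝 0) :=
    squeeze_zero' (.of_forall fun _ => norm_nonneg _) ((eventually_gt_atTop 0).mono hAnorm)
      (tendsto_const_nhds.div_atTop tendsto_id)
  refine tendsto_mul_one_add_smul_of_isResolvent hT hK z ((eventually_gt_atTop 0).mono hA)
    ⟨1 + ‖z‖, eventually_map.2 ?_⟩ hA0
  filter_upwards [eventually_ge_atTop 1] with ν hν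
  have hν0 : 0 < ν := by linarith
  calc ‖w ν - z‖ * ‖A ν‖ ≤ (ν + ‖z‖) * (1 / ν) := by
        gcongr
        · exact (norm_sub_le _ _).trans_eq (by rw [hw, abs_of_pos hν0])
        · exact hAnorm ν hν0
    _ ≤ 1 + ‖z‖ := by
        rw [mul_one_div, div_le_iff₀ hν0]
        nlinarith [norm_nonneg z]

end LinearPMap

theorem selfAdjoint_add_relatively_compact_symmetric_general
    {H : Type*} [NormedAddCommGroup H] [InnerProductSpace ℂ H] [CompleteSpace H]
    (T R : H →ₗ.[ℂ] H)
    (hTsa : T.adjoint = T)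
    (B : ℝ → H →L[ℂ] H)
    (hBnorm : ∀ μ : ℝ, 0 < μ → ‖B μ‖ ≤ 1 / μ)
    (hBmem : ∀ μ : ℝ, 0 < μ → ∀ x : H, B μ x ∈ T.domain)
    (hBright : ∀ (μ : ℝ) (hμ : 0 < μ) (x : H),
      T ⟨B μ x, hBmem μ hμ x⟩ - (Complex.I * (μ : ℂ)) • B μ x = x)
    (hBleft : ∀ (μ : ℝ), 0 < μ → ∀ ψ : T.domain,
      B μ (T ψ - (Complex.I * (μ : ℂ)) • (ψ : H)) = (ψ : H))
    (hRsymm : ∀ ψ φ : R.domain, ⟪R ψ, (φ : H)⟫_ℂ = ⟪(ψ : H), R φ⟫_ℂ)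
    (hdom : T.domain ≤ R.domain)
    (K : H →L[ℂ] H) (hK : IsCompactOperator K)
    (hKR : ∀ x : H, K x = R ⟨B 1 x, hdom (hBmem 1 one_pos x)⟩) :
    (T + R).adjoint = T + R := by
  have hT : IsSelfAdjoint T := hTsa
  have hres : ∀ μ : ℝ, 0 < μ → T.IsResolvent (Complex.I * μ) (B μ) := fun μ hμ =>
    ⟨hBmem μ hμ, hBright μ hμ, hBleft μ hμ⟩
  have hres' : ∀ μ : ℝ, 0 < μ → T.IsResolvent (conj (Complex.I * μ)) (star (B μ)) :=
    fun μ hμ => hT.isResolvent_star (hres μ hμ)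
  obtain ⟨μ, hμ, hunit, hunit'⟩ := ((eventually_gt_atTop 0).and
    ((LinearPMap.eventually_isUnit_one_add_mul_one_add_smul_of_isResolvent hT hK
      (Complex.I * (1 : ℝ)) hres (by simp) hBnorm).and
    (LinearPMap.eventually_isUnit_one_add_mul_one_add_smul_of_isResolvent hT hK
      (Complex.I * (1 : ℝ)) hres' (by simp) fun μ hμ =>
        (norm_star (B μ)).trans_le (hBnorm μ hμ)))).exists
  have hsum_dense : Dense ((T + R).domain : Set H) := by
    rw [LinearPMap.add_domain, inf_eq_left.2 hdom]
    exact hT.dense_domain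
  exact LinearPMap.adjoint_eq_self_of_forall_exists_sub_smul_eq hsum_dense
    (hT.isFormalAdjoint_self.add hRsymm) (Complex.I * μ)
    ((hres 1 one_pos).exists_add_apply_sub_smul_eq (hres μ hμ) hdom hKR hunit)
    ((hres 1 one_pos).exists_add_apply_sub_smul_eq (hres' μ hμ) hdom hKR hunit')

/-- **Proposition A.7 (Hilbert-space case).** Let `T` be a densely defined self-adjoint operator
on a complex Hilbert space, admitting resolvents `B μ = (T − iμ)⁻¹` with `‖B μ‖ ≤ 1/μ` for all
`μ > 0`.  Let `R` be a symmetric operator with `dom T ⊆ dom R` such that `R (T − i)⁻¹` is compact.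
Then `T + R` is self-adjoint. -/
theorem selfAdjoint_add_relatively_compact_symmetric
    {H : Type*} [NormedAddCommGroup H] [InnerProductSpace ℂ H] [CompleteSpace H]
    (T R : H →ₗ.[ℂ] H)
    (hdense : Dense (T.domain : Set H))
    (hTsa : T.adjoint = T)
    (B : ℝ → H →L[ℂ] H)
    (hBnorm : ∀ μ : ℝ, 0 < μ → ‖B μ‖ ≤ 1 / μ)
    (hBmem : ∀ μ : ℝ, 0 < μ → ∀ x : H, B μ x ∈ T.domain)
    (hBright : ∀ (μ : ℝ) (hμ : 0 < μ) (x : H),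
      T ⟨B μ x, hBmem μ hμ x⟩ - (Complex.I * (μ : ℂ)) • B μ x = x)
    (hBleft : ∀ (μ : ℝ), 0 < μ → ∀ ψ : T.domain,
      B μ (T ψ - (Complex.I * (μ : ℂ)) • (ψ : H)) = (ψ : H))
    (hRsymm : ∀ ψ φ : R.domain, ⟪R ψ, (φ : H)⟫_ℂ = ⟪(ψ : H), R φ⟫_ℂ)
    (hdom : T.domain ≤ R.domain)
    (K : H →L[ℂ] H) (hK : IsCompactOperator K)
    (hKR : ∀ x : H, K x = R ⟨B 1 x, hdom (hBmem 1 one_pos x)⟩) :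
    (T + R).adjoint = T + R :=
  selfAdjoint_add_relatively_compact_symmetric_general T R hTsa B hBnorm hBmem hBright hBleft hRsymm
    hdom K hK hKR
end

section
/- Let H be a complex Hilbert space, let T be a densely defined symmetric unbounded operator on H, and assume B is a bounded operator on H with B x in the domain of T and T(Bx) − i·Bx = x for all x, and B(Tψ − iψ) = ψ for all ψ in the domain of T (B = (T − i)⁻¹). Suppose Q is a bounded operator on H which is a parametrix for T, i.e. the range of Q is contained in the domain of T and there exist compact bounded operators K₁, K₂ with T(Qx) − x = K₁ x for all x ∈ H and Q(Tψ) − ψ = K₂ ψ for all ψ in the domain of T. Let R be a symmetric unbounded operator whose domain contains the domain of T, such that there is a compact bounded operator K with K x = R(Bx) for all x. Then Q is also a parametrix for T + R: there exist compact bounded operators K₁', K₂' with T(Qx) + R(Qx) − x = K₁' x for all x ∈ H and Q(Tψ + Rψ) − ψ = K₂' ψ for all ψ in the domain of T. -/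
open scoped InnerProductSpace

/-!
Since `B (T - i) = 1`, the right parametrix identity gives `Q = B (1 + K₁ - iQ)`, so
`R Q = K (1 + K₁ - iQ)` is compact and `(T + R) Q - 1` is compact. Symmetrically
`Q = (1 + K₂ - iQ) B`, so `Q R = (1 + K₂ - iQ) B R` on `dom T`, and it remains to see that `B R`
agrees on `dom T` with a compact operator. For the Cayley transform
`U = (T + i)(T - i)⁻¹ = 1 + 2iB`, symmetry of `T` gives `⟪B z, U x⟫ = ⟪z, B x⟫`, and symmetry of
`R` then `⟪B R ψ, U x⟫ = ⟪ψ, K x⟫`. So if `U` is onto, `B R = (K U⁻¹)*` on `dom T`, which is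
compact because adjoints of compact operators are.

`U` is an isometry because `T` is symmetric, and it is onto (`T` is self-adjoint) because `T` has a
parametrix. Otherwise a unit vector `w ⊥ range U` makes the `(-U)^k w` orthonormal, and normalised
sums of them are unit vectors `x`, pairwise at distance `≥ 1`, with `x + U x → 0`. But
`(1 + K₂ - iQ)(1 + U) = 2 (1 + K₂)`, and a compact perturbation of the identity cannot send such a
sequence to `0`.
-/

open scoped InnerProduct
open Filter Topology Finset

section CompactAdjoint

variable {𝕜 E F : Type*} [RCLike 𝕜] [NormedAddCommGroup E] [InnerProductSpace 𝕜 E] [CompleteSpace E]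
  [NormedAddCommGroup F] [InnerProductSpace 𝕜 F] [CompleteSpace F]

theorem ContinuousLinearMap.norm_adjoint_apply_sq_le (A : E →L[𝕜] F) (y : F) :
    ‖(A†) y‖ ^ 2 ≤ ‖y‖ * ‖A ((A†) y)‖ := by
  rw [(A†).apply_norm_sq_eq_inner_adjoint_right, adjoint_adjoint]
  exact (RCLike.re_le_norm _).trans (norm_inner_le_norm _ _)

theorem IsCompactOperator.adjoint {A : E →L[𝕜] F} (hA : IsCompactOperator A) :
    IsCompactOperator (A†) := by
  refine (isCompactOperator_iff_isCompact_closure_image_closedBall (A† : F →ₗ[𝕜] E)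
    zero_lt_one).mpr ((TotallyBounded.closure ?_).isCompact_of_isClosed isClosed_closure)
  have hAA : TotallyBounded ((A ∘L A†) '' Metric.closedBall 0 1) :=
    ((hA.comp_clm _).isCompact_closure_image_closedBall 1).totallyBounded.subset subset_closure
  rw [Metric.totallyBounded_iff]
  intro ε hε
  -- By `norm_adjoint_apply_sq_le`, an `ε²/2`-net for `A A*` on the ball is an `ε`-net for `A*`.
  obtain ⟨t, htB, ht, hcover⟩ := Set.exists_subset_image_finite_and.mp
    (Metric.finite_approx_of_totallyBounded hAA (ε ^ 2 / 2) (by positivity))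
  refine ⟨A† '' t, ht.image _, ?_⟩
  rintro _ ⟨y, hy, rfl⟩
  obtain ⟨_, ⟨v, hv, rfl⟩, hyv⟩ := Set.mem_iUnion₂.mp (hcover ⟨y, hy, rfl⟩)
  refine Set.mem_iUnion₂.mpr ⟨(A†) v, ⟨v, hv, rfl⟩, ?_⟩
  rw [Metric.mem_ball, dist_eq_norm] at hyv ⊢
  have hyv_le : ‖y - v‖ ≤ 2 := by
    have := norm_sub_le y v
    have := mem_closedBall_zero_iff.mp hy
    have := mem_closedBall_zero_iff.mp (htB hv)
    linarith
  refine lt_of_pow_lt_pow_left₀ 2 hε.le ?_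
  calc ‖(A†) y - (A†) v‖ ^ 2 = ‖(A†) (y - v)‖ ^ 2 := by rw [map_sub]
    _ ≤ ‖y - v‖ * ‖A ((A†) (y - v))‖ := A.norm_adjoint_apply_sq_le _
    _ ≤ 2 * ‖A ((A†) (y - v))‖ := by gcongr
    _ < 2 * (ε ^ 2 / 2) := by
        gcongr
        simpa [map_sub] using hyv
    _ = ε ^ 2 := by ring

end CompactAdjoint

theorem IsCompactOperator.not_tendsto_add_apply_of_pairwise_le_norm_sub {𝕜 E : Type*}
    [NontriviallyNormedField 𝕜] [NormedAddCommGroup E] [NormedSpace 𝕜 E] {C : E →L[𝕜] E}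
    (hC : IsCompactOperator C) {x : ℕ → E} {r δ : ℝ} (hx : ∀ n, ‖x n‖ ≤ r) (hδ : 0 < δ)
    (hsep : Pairwise fun m n => δ ≤ ‖x m - x n‖) :
    ¬ Tendsto (fun n => x n + C (x n)) atTop (𝓝 0) := by
  intro hlim
  obtain ⟨K, hK, hCK⟩ := hC.image_closedBall_subset_compact (f := (C : E →ₗ[𝕜] E)) r
  obtain ⟨p, -, φ, hφ, hCx⟩ := hK.tendsto_subseq (x := fun n => C (x n))
    fun n => hCK ⟨x n, mem_closedBall_zero_iff.mpr (hx n), rfl⟩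
  have hxφ : Tendsto (x ∘ φ) atTop (𝓝 (-p)) := by
    simpa [Function.comp_def] using (hlim.comp hφ.tendsto_atTop).sub hCx
  obtain ⟨N, hN⟩ := Metric.cauchySeq_iff'.mp hxφ.cauchySeq δ hδ
  have := hN (N + 1) N.le_succ
  rw [dist_eq_norm] at this
  exact (hsep (hφ.injective.ne N.succ_ne_self)).not_gt this

theorem LinearMap.sum_range_sub_apply_sum_range {R M : Type*} [Semiring R] [AddCommGroup M]
    [Module R M] (U : M →ₗ[R] M) {e : ℕ → M} (hUe : ∀ k, U (e k) = e (k + 1)) (N : ℕ) :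
    ∑ k ∈ Finset.range N, e k - U (∑ k ∈ Finset.range N, e k) = e 0 - e N := by
  rw [map_sum, ← sum_sub_distrib, ← sum_range_sub' e]
  simp only [hUe]

section Isometry

variable {𝕜 E : Type*} [RCLike 𝕜] [NormedAddCommGroup E] [InnerProductSpace 𝕜 E]

theorem Orthonormal.inner_sum_sum {ι : Type*} [DecidableEq ι] {e : ι → E} (he : Orthonormal 𝕜 e)
    (s t : Finset ι) : ⟪∑ i ∈ s, e i, ∑ j ∈ t, e j⟫_𝕜 = #(s ∩ t) := by
  simp_rw [sum_inner, inner_sum, orthonormal_iff_ite.mp he, sum_ite_eq, ← sum_filter,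
    sum_const, nsmul_one, filter_mem_eq_inter]

theorem Orthonormal.exists_seq_tendsto_sub_of_apply_eq_succ (U : E →ₗ[𝕜] E) {e : ℕ → E}
    (he : Orthonormal 𝕜 e) (hUe : ∀ k, U (e k) = e (k + 1)) :
    ∃ x : ℕ → E, (∀ n, ‖x n‖ = 1) ∧ Pairwise (fun m n => 1 ≤ ‖x m - x n‖) ∧
      Tendsto (fun n => x n - U (x n)) atTop (𝓝 0) := by
  -- `x n` is the normalised sum of `e 0, …, e (4 ^ n - 1)`: then `⟪x m, x n⟫ = 2 ^ (m - n)` for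
  -- `m ≤ n`, while `x n - U (x n) = 2⁻ⁿ (e 0 - e (4 ^ n))`.
  set x : ℕ → E := fun n => (((2 : ℝ) ^ n)⁻¹ : 𝕜) • ∑ k ∈ range (4 ^ n), e k
  have inner_x : ∀ m n, m ≤ n → RCLike.re ⟪x m, x n⟫_𝕜 = 2 ^ m / 2 ^ n := by
    intro m n hmn
    have h4 : 4 ^ m ≤ 4 ^ n := Nat.pow_le_pow_right (by norm_num) hmn
    simp only [x, inner_smul_left, inner_smul_right, he.inner_sum_sum, range_inter_range,
      min_eq_left h4, card_range, map_inv₀, map_pow, RCLike.conj_ofReal]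
    norm_cast
    push_cast
    rw [show (4 : ℝ) = 2 * 2 by norm_num, mul_pow]
    field_simp
  have norm_x : ∀ n, ‖x n‖ = 1 := by
    intro n
    have := inner_x n n le_rfl
    rwa [div_self (by positivity), inner_self_eq_norm_sq,
      pow_eq_one_iff_of_nonneg (norm_nonneg _) two_ne_zero] at this
  refine ⟨x, norm_x, fun m n hmn => ?_, ?_⟩
  · wlog hlt : m < n generalizing m n
    · rw [norm_sub_rev]; exact this n m hmn.symm (by omega)
    have hle : (2 : ℝ) ^ m / 2 ^ n ≤ 1 / 2 := by
      rw [div_le_div_iff₀ (by positivity) (by positivity)]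
      calc 2 ^ m * 2 = (2 : ℝ) ^ (m + 1) := by ring
        _ ≤ 1 * 2 ^ n := by rw [one_mul]; exact pow_le_pow_right₀ (by norm_num) hlt
    have := norm_sub_sq (𝕜 := 𝕜) (x m) (x n)
    rw [norm_x, norm_x, inner_x m n hlt.le] at this
    nlinarith [norm_nonneg (x m - x n)]
  · have bound : ∀ n, ‖x n - U (x n)‖ ≤ 2 * (1 / 2) ^ n := by
      intro n
      simp only [x, map_smul, ← smul_sub, U.sum_range_sub_apply_sum_range hUe, norm_smul,
        norm_inv, norm_pow, RCLike.norm_ofReal, abs_two]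
      calc (2 ^ n)⁻¹ * ‖e 0 - e (4 ^ n)‖ ≤ (2 ^ n)⁻¹ * (‖e 0‖ + ‖e (4 ^ n)‖) := by
            gcongr; exact norm_sub_le _ _
        _ = 2 * (1 / 2) ^ n := by rw [he.1, he.1, one_div_pow]; ring
    refine squeeze_zero_norm bound ?_
    simpa using (tendsto_pow_atTop_nhds_zero_of_lt_one (r := (1 / 2 : ℝ)) (by norm_num)
      (by norm_num)).const_mul 2

theorem LinearIsometry.exists_norm_eq_one_forall_inner_eq_zero [CompleteSpace E]
    (U : E →ₗᵢ[𝕜] E) (hU : ¬ Function.Surjective U) :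
    ∃ w : E, ‖w‖ = 1 ∧ ∀ x, ⟪U x, w⟫_𝕜 = 0 := by
  let M := LinearMap.range U.toLinearMap
  have : CompleteSpace M := U.isometry.isClosedEmbedding.isClosed_range.completeSpace_coe
  have hM : Mᗮ ≠ ⊥ := by
    rwa [Ne, Submodule.orthogonal_eq_bot_iff, LinearMap.range_eq_top]
  obtain ⟨w, hwM, hw⟩ := Submodule.exists_mem_ne_zero_of_ne_bot hM
  refine ⟨(‖w‖⁻¹ : 𝕜) • w, norm_smul_inv_norm hw, fun x => ?_⟩
  rw [inner_smul_right, (Submodule.mem_orthogonal M w).mp hwM (U x) ⟨x, rfl⟩, mul_zero]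

theorem LinearIsometry.orthonormal_iterate (U : E →ₗᵢ[𝕜] E) {w : E} (hw : ‖w‖ = 1)
    (hwU : ∀ x, ⟪U x, w⟫_𝕜 = 0) : Orthonormal 𝕜 fun k => U^[k] w := by
  have inner_iterate_add : ∀ j d, ⟪U^[j] w, U^[j + d] w⟫_𝕜 = ⟪w, U^[d] w⟫_𝕜 := by
    intro j d
    induction j with
    | zero => simp
    | succ j ih => rw [add_right_comm, Function.iterate_succ_apply', Function.iterate_succ_apply',
        U.inner_map_map, ih]
  refine ⟨fun k => ?_, fun j k hjk => ?_⟩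
  · induction k with
    | zero => exact hw
    | succ k ih => simpa only [Function.iterate_succ_apply', U.norm_map] using ih
  · wlog hlt : j < k generalizing j k
    · exact inner_eq_zero_symm.mp (this k j hjk.symm (by omega))
    obtain ⟨d, rfl⟩ := Nat.exists_eq_add_of_lt hlt
    rw [add_assoc, inner_iterate_add, Function.iterate_succ_apply', inner_eq_zero_symm]
    exact hwU _

theorem LinearIsometry.surjective_of_comp_one_add_eq [CompleteSpace E] (U : E →ₗᵢ[𝕜] E)
    (P C : E →L[𝕜] E) (hC : IsCompactOperator C) (hPU : ∀ x, P (x + U x) = x + C x) :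
    Function.Surjective U := by
  by_contra hU
  let V : E →ₗᵢ[𝕜] E := (LinearIsometryEquiv.neg 𝕜).toLinearIsometry.comp U
  have hV : ¬ Function.Surjective V := fun hV => hU fun y =>
    (hV (-y)).imp fun x hx => by simpa [V] using hx
  obtain ⟨w, hw, hwV⟩ := V.exists_norm_eq_one_forall_inner_eq_zero hV
  obtain ⟨x, hx, hsep, hlim⟩ :=
    (V.orthonormal_iterate hw hwV).exists_seq_tendsto_sub_of_apply_eq_succ V.toLinearMap
      fun k => (Function.iterate_succ_apply' V k w).symm
  refine hC.not_tendsto_add_apply_of_pairwise_le_norm_sub (fun n => (hx n).le) one_pos hsep ?_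
  simpa [V, Function.comp_def, hPU] using (P.continuous.tendsto 0).comp hlim

end Isometry

section SymmetricOperator

variable {H : Type*} [NormedAddCommGroup H] [InnerProductSpace ℂ H] {T : H →ₗ.[ℂ] H}

theorem inner_apply_sub_smul_eq (hT : ∀ ψ φ : T.domain, ⟪T ψ, (φ : H)⟫_ℂ = ⟪(ψ : H), T φ⟫_ℂ)
    (c : ℂ) (ψ φ : T.domain) :
    ⟪T ψ - c • (ψ : H), φ⟫_ℂ = ⟪(ψ : H), T φ - starRingEnd ℂ c • (φ : H)⟫_ℂ := by
  rw [inner_sub_left, inner_smul_left, hT, inner_sub_right, inner_smul_right]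

theorem norm_apply_add_I_smul_eq (hT : ∀ ψ φ : T.domain, ⟪T ψ, (φ : H)⟫_ℂ = ⟪(ψ : H), T φ⟫_ℂ)
    (φ : T.domain) : ‖T φ + Complex.I • (φ : H)‖ = ‖T φ - Complex.I • (φ : H)‖ := by
  have hreal : (⟪T φ, (φ : H)⟫_ℂ).im = 0 :=
    Complex.conj_eq_iff_im.mp ((inner_conj_symm _ _).trans (hT φ φ).symm)
  have hre : RCLike.re ⟪T φ, Complex.I • (φ : H)⟫_ℂ = 0 := by
    simp [hreal]
  rw [← sq_eq_sq₀ (norm_nonneg _) (norm_nonneg _), norm_add_sq (𝕜 := ℂ), norm_sub_sq (𝕜 := ℂ),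
    hre, mul_zero, add_zero, sub_zero]

theorem eq_resolvent_comp_of_right_parametrix {B Q K₁ : H →L[ℂ] H}
    (hBleft : ∀ ψ : T.domain, B (T ψ - Complex.I • (ψ : H)) = (ψ : H))
    (hQmem : ∀ x, Q x ∈ T.domain) (hQright : ∀ x, T ⟨Q x, hQmem x⟩ - x = K₁ x) :
    Q = B ∘L (1 + K₁ - Complex.I • Q) := by
  ext x
  have h := hBleft ⟨Q x, hQmem x⟩
  rw [sub_eq_iff_eq_add.mp (hQright x)] at h
  simp only [ContinuousLinearMap.comp_apply, sub_apply, add_apply, one_apply_eq_self, smul_apply]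
  simpa only [add_comm (K₁ x)] using h.symm

/-- The Cayley transform `(T + i)(T - i)⁻¹ = 1 + 2i (T - i)⁻¹`, in terms of the resolvent
`B = (T - i)⁻¹`. -/
def cayleyOfResolvent (B : H →L[ℂ] H) : H →L[ℂ] H := 1 + (2 * Complex.I) • B

variable {B : H →L[ℂ] H} (hBmem : ∀ x, B x ∈ T.domain)
  (hBright : ∀ x, T ⟨B x, hBmem x⟩ - Complex.I • B x = x)
include hBright

theorem cayleyOfResolvent_apply (x : H) :
    cayleyOfResolvent B x = T ⟨B x, hBmem x⟩ + Complex.I • B x := by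
  simp only [cayleyOfResolvent, add_apply, one_apply_eq_self, smul_apply]
  linear_combination (norm := module) (-1 : ℂ) • hBright x

theorem eq_comp_resolvent_of_left_parametrix {Q K₂ : H →L[ℂ] H}
    (hQleft : ∀ ψ : T.domain, Q (T ψ) - (ψ : H) = K₂ (ψ : H)) :
    Q = (1 + K₂ - Complex.I • Q) ∘L B := by
  ext z
  have h := hQleft ⟨B z, hBmem z⟩
  rw [sub_eq_iff_eq_add.mp (hBright z), map_add, map_smul] at h
  simp only [ContinuousLinearMap.comp_apply, sub_apply, add_apply, one_apply_eq_self, smul_apply]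
  linear_combination (norm := module) h

variable (hT : ∀ ψ φ : T.domain, ⟪T ψ, (φ : H)⟫_ℂ = ⟪(ψ : H), T φ⟫_ℂ)
include hT

theorem norm_cayleyOfResolvent_apply (x : H) : ‖cayleyOfResolvent B x‖ = ‖x‖ := by
  rw [cayleyOfResolvent_apply hBmem hBright, norm_apply_add_I_smul_eq hT, hBright]

theorem inner_cayleyOfResolvent_apply (z x : H) :
    ⟪B z, cayleyOfResolvent B x⟫_ℂ = ⟪z, B x⟫_ℂ := by
  have h := inner_apply_sub_smul_eq hT Complex.I ⟨B z, hBmem z⟩ ⟨B x, hBmem x⟩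
  rw [hBright, Complex.conj_I, neg_smul, sub_neg_eq_add] at h
  rw [cayleyOfResolvent_apply hBmem hBright, ← h]

theorem cayleyOfResolvent_surjective [CompleteSpace H] {Q K₂ : H →L[ℂ] H}
    (hK₂ : IsCompactOperator K₂) (hQleft : ∀ ψ : T.domain, Q (T ψ) - (ψ : H) = K₂ (ψ : H)) :
    Function.Surjective (cayleyOfResolvent B) := by
  let U : H →ₗᵢ[ℂ] H := ⟨cayleyOfResolvent B, norm_cayleyOfResolvent_apply hBmem hBright hT⟩
  refine U.surjective_of_comp_one_add_eq ((2 : ℂ)⁻¹ • (1 + K₂ - Complex.I • Q)) K₂ hK₂ fun x => ?_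
  have hQ := congr($(eq_comp_resolvent_of_left_parametrix hBmem hBright hQleft) x)
  simp only [ContinuousLinearMap.comp_apply, sub_apply, add_apply, one_apply_eq_self,
    smul_apply] at hQ
  simp only [U, LinearIsometry.coe_mk, ContinuousLinearMap.coe_coe, cayleyOfResolvent, smul_apply,
    sub_apply, add_apply, one_apply_eq_self, map_add, map_smul]
  linear_combination (norm := module) (-Complex.I) • hQ

theorem exists_isCompactOperator_apply_eq_resolvent_apply [CompleteSpace H]
    (hU : Function.Surjective (cayleyOfResolvent B)) {R : H →ₗ.[ℂ] H}
    (hR : ∀ ψ φ : R.domain, ⟪R ψ, (φ : H)⟫_ℂ = ⟪(ψ : H), R φ⟫_ℂ) (hdom : T.domain ≤ R.domain)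
    {K : H →L[ℂ] H} (hK : IsCompactOperator K) (hKR : ∀ x, K x = R ⟨B x, hdom (hBmem x)⟩) :
    ∃ L : H →L[ℂ] H, IsCompactOperator L ∧ ∀ ψ : T.domain, L ψ = B (R ⟨ψ, hdom ψ.2⟩) := by
  let U := LinearIsometryEquiv.ofSurjective
    ⟨(cayleyOfResolvent B : H →ₗ[ℂ] H), norm_cayleyOfResolvent_apply hBmem hBright hT⟩ hU
  refine ⟨(K ∘L (U.symm : H →L[ℂ] H))†, (hK.comp_clm _).adjoint,
    fun ψ => ext_inner_right ℂ fun v => ?_⟩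
  have hUv : cayleyOfResolvent B (U.symm v) = v := U.apply_symm_apply v
  rw [ContinuousLinearMap.adjoint_inner_left, ContinuousLinearMap.comp_apply, hKR,
    ← hR ⟨ψ, hdom ψ.2⟩, ← inner_cayleyOfResolvent_apply hBmem hBright hT]
  exact congrArg _ hUv

end SymmetricOperator

theorem parametrix_of_relatively_compact_perturbation_general
    {H : Type*} [NormedAddCommGroup H] [InnerProductSpace ℂ H] [CompleteSpace H]
    (T R : H →ₗ.[ℂ] H)
    (hTsymm : ∀ ψ φ : T.domain, ⟪T ψ, (φ : H)⟫_ℂ = ⟪(ψ : H), T φ⟫_ℂ)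
    (hRsymm : ∀ ψ φ : R.domain, ⟪R ψ, (φ : H)⟫_ℂ = ⟪(ψ : H), R φ⟫_ℂ)
    (hdom : T.domain ≤ R.domain)
    (B : H →L[ℂ] H)
    (hBmem : ∀ x : H, B x ∈ T.domain)
    (hBright : ∀ x : H, T ⟨B x, hBmem x⟩ - Complex.I • B x = x)
    (hBleft : ∀ ψ : T.domain, B (T ψ - Complex.I • (ψ : H)) = (ψ : H))
    (Q : H →L[ℂ] H)
    (hQmem : ∀ x : H, Q x ∈ T.domain)
    (K₁ K₂ : H →L[ℂ] H) (hK₁ : IsCompactOperator K₁) (hK₂ : IsCompactOperator K₂)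
    (hQright : ∀ x : H, T ⟨Q x, hQmem x⟩ - x = K₁ x)
    (hQleft : ∀ ψ : T.domain, Q (T ψ) - (ψ : H) = K₂ (ψ : H))
    (K : H →L[ℂ] H) (hK : IsCompactOperator K)
    (hKR : ∀ x : H, K x = R ⟨B x, hdom (hBmem x)⟩) :
    ∃ K₁' K₂' : H →L[ℂ] H, IsCompactOperator K₁' ∧ IsCompactOperator K₂' ∧
      (∀ x : H, T ⟨Q x, hQmem x⟩ + R ⟨Q x, hdom (hQmem x)⟩ - x = K₁' x) ∧
      (∀ ψ : T.domain, Q (T ψ + R ⟨(ψ : H), hdom ψ.2⟩) - (ψ : H) = K₂' (ψ : H)) := by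
  have hU := cayleyOfResolvent_surjective hBmem hBright hTsymm hK₂ hQleft
  obtain ⟨L, hL, hLB⟩ :=
    exists_isCompactOperator_apply_eq_resolvent_apply hBmem hBright hTsymm hU hRsymm hdom hK hKR
  set W := 1 + K₁ - Complex.I • Q
  set P := 1 + K₂ - Complex.I • Q
  have hQW : ∀ x, Q x = B (W x) := fun x =>
    congr($(eq_resolvent_comp_of_right_parametrix hBleft hQmem hQright) x)
  have hQP : ∀ z, Q z = P (B z) := fun z =>
    congr($(eq_comp_resolvent_of_left_parametrix hBmem hBright hQleft) z)
  refine ⟨K₁ + K ∘L W, K₂ + P ∘L L, hK₁.add (hK.comp_clm W), hK₂.add (hL.clm_comp P),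
    fun x => ?_, fun ψ => ?_⟩
  · have hRQ : R ⟨Q x, hdom (hQmem x)⟩ = K (W x) := by
      rw [hKR]
      exact congrArg R (Subtype.ext (hQW x))
    rw [hRQ, add_sub_right_comm, hQright]
    rfl
  · rw [map_add, add_sub_right_comm, hQleft, hQP, ← hLB]
    rfl

/-- **Proposition 2.1.(1) (Hilbert-space case).** Let `T` be a densely defined symmetric operator
with resolvent `B = (T − i)⁻¹`, and let `Q` be a parametrix for `T` (i.e. `T ∘ Q − 1` and
`Q ∘ T − 1` are compact).  If `R` is a symmetric operator with `dom T ⊆ dom R` such that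
`R (T − i)⁻¹` is compact, then `Q` is also a parametrix for `T + R`. -/
theorem parametrix_of_relatively_compact_perturbation
    {H : Type*} [NormedAddCommGroup H] [InnerProductSpace ℂ H] [CompleteSpace H]
    (T R : H →ₗ.[ℂ] H)
    (hdense : Dense (T.domain : Set H))
    (hTsymm : ∀ ψ φ : T.domain, ⟪T ψ, (φ : H)⟫_ℂ = ⟪(ψ : H), T φ⟫_ℂ)
    (hRsymm : ∀ ψ φ : R.domain, ⟪R ψ, (φ : H)⟫_ℂ = ⟪(ψ : H), R φ⟫_ℂ)
    (hdom : T.domain ≤ R.domain)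
    (B : H →L[ℂ] H)
    (hBmem : ∀ x : H, B x ∈ T.domain)
    (hBright : ∀ x : H, T ⟨B x, hBmem x⟩ - Complex.I • B x = x)
    (hBleft : ∀ ψ : T.domain, B (T ψ - Complex.I • (ψ : H)) = (ψ : H))
    (Q : H →L[ℂ] H)
    (hQmem : ∀ x : H, Q x ∈ T.domain)
    (K₁ K₂ : H →L[ℂ] H) (hK₁ : IsCompactOperator K₁) (hK₂ : IsCompactOperator K₂)
    (hQright : ∀ x : H, T ⟨Q x, hQmem x⟩ - x = K₁ x)
    (hQleft : ∀ ψ : T.domain, Q (T ψ) - (ψ : H) = K₂ (ψ : H))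
    (K : H →L[ℂ] H) (hK : IsCompactOperator K)
    (hKR : ∀ x : H, K x = R ⟨B x, hdom (hBmem x)⟩) :
    ∃ K₁' K₂' : H →L[ℂ] H, IsCompactOperator K₁' ∧ IsCompactOperator K₂' ∧
      (∀ x : H, T ⟨Q x, hQmem x⟩ + R ⟨Q x, hdom (hQmem x)⟩ - x = K₁' x) ∧
      (∀ ψ : T.domain, Q (T ψ + R ⟨(ψ : H), hdom ψ.2⟩) - (ψ : H) = K₂' (ψ : H)) :=
  parametrix_of_relatively_compact_perturbation_general T R hTsymm hRsymm hdom B hBmem hBright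
    hBleft Q hQmem K₁ K₂ hK₁ hK₂ hQright hQleft K hK hKR
end

section
/- Let H be a complex Hilbert space and let a, b be bounded self-adjoint operators on H such that b − a is a compact operator. Then for every continuous function f : ℝ → ℝ, the operator cfc f b − cfc f a is compact, where cfc denotes the continuous functional calculus of a self-adjoint bounded operator. -/
open Polynomial

section Aux

variable {H : Type*} [NormedAddCommGroup H] [InnerProductSpace ℂ H] [CompleteSpace H]

lemma aux_mul_compact_left (u v : H →L[ℂ] H) (hv : IsCompactOperator v) :
    IsCompactOperator (u * v) :=
  hv.clm_comp u

lemma aux_mul_compact_right (u v : H →L[ℂ] H) (hu : IsCompactOperator u) :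
    IsCompactOperator (u * v) :=
  hu.comp_clm v

lemma aux_pow_sub_compact (a b : H →L[ℂ] H) (hab : IsCompactOperator (b - a)) :
    ∀ n : ℕ, IsCompactOperator ((b ^ n - a ^ n : H →L[ℂ] H)) := by
  intro n
  induction n with
  | zero => simpa using (isCompactOperator_zero : IsCompactOperator (0 : H → H))
  | succ n ih =>
    have h1 : b ^ (n + 1) - a ^ (n + 1) = b * (b ^ n - a ^ n) + (b - a) * a ^ n := by
      rw [pow_succ', pow_succ', mul_sub, sub_mul]
      abel
    rw [h1]
    exact (aux_mul_compact_left b _ ih).add (aux_mul_compact_right (b - a) (a ^ n) hab)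

set_option synthInstance.maxHeartbeats 1000000 in
lemma aux_aeval_sub_compact (a b : H →L[ℂ] H) (hab : IsCompactOperator (b - a))
    (p : ℝ[X]) : IsCompactOperator ((aeval b p - aeval a p : H →L[ℂ] H)) := by
  induction p using Polynomial.induction_on with
  | C r => simpa using (isCompactOperator_zero : IsCompactOperator (0 : H → H))
  | add p q hp hq =>
    have h1 : aeval b (p + q) - aeval a (p + q)
        = (aeval b p - aeval a p) + (aeval b q - aeval a q) := by
      simp only [map_add]; abel
    rw [h1]
    exact hp.add hq
  | monomial n r _ =>
    have h1 : aeval b (C r * X ^ (n + 1)) - aeval a (C r * X ^ (n + 1))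
        = r • (b ^ (n + 1) - a ^ (n + 1)) := by
      simp [Algebra.algebraMap_eq_smul_one, smul_sub, smul_mul_assoc]
    rw [h1]
    exact (aux_pow_sub_compact a b hab (n + 1)).smul r

end Aux

/-- **Proposition A.9 (bounded-operator case).** If `a` and `b` are bounded self-adjoint operators
on a complex Hilbert space with `b − a` compact, then for every continuous function `f : ℝ → ℝ`,
the operator `f(b) − f(a)` (continuous functional calculus) is compact. -/
theorem cfc_sub_cfc_compact_of_compact_difference
    {H : Type*} [NormedAddCommGroup H] [InnerProductSpace ℂ H] [CompleteSpace H]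
    (a b : H →L[ℂ] H) (ha : IsSelfAdjoint a) (hb : IsSelfAdjoint b)
    (hab : IsCompactOperator (b - a)) :
    ∀ f : ℝ → ℝ, Continuous f → IsCompactOperator (cfc f b - cfc f a) := by
  intro f hf
  obtain hH | hH := subsingleton_or_nontrivial H
  · have : cfc f b - cfc f a = 0 := Subsingleton.elim _ _
    rw [this]
    simpa using (isCompactOperator_zero : IsCompactOperator (0 : H → H))
  -- the set of compact operators is closed; approximate by polynomials
  suffices h : (cfc f b - cfc f a) ∈ closure { T : H →L[ℂ] H | IsCompactOperator T } by
    rwa [isClosed_setOf_isCompactOperator.closure_eq] at h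
  rw [Metric.mem_closure_iff]
  intro ε hε
  set M : ℝ := max ‖a‖ ‖b‖ with hM
  have hspec_a : spectrum ℝ a ⊆ Set.Icc (-M) M := by
    intro x hx
    have := spectrum.norm_le_norm_of_mem hx
    rw [Real.norm_eq_abs, abs_le] at this
    constructor
    · linarith [this.1, le_max_left ‖a‖ ‖b‖]
    · linarith [this.2, le_max_left ‖a‖ ‖b‖]
  have hspec_b : spectrum ℝ b ⊆ Set.Icc (-M) M := by
    intro x hx
    have := spectrum.norm_le_norm_of_mem hx
    rw [Real.norm_eq_abs, abs_le] at this
    constructor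
    · linarith [this.1, le_max_right ‖a‖ ‖b‖]
    · linarith [this.2, le_max_right ‖a‖ ‖b‖]
  obtain ⟨p, hp⟩ := exists_polynomial_near_of_continuousOn (-M) M f hf.continuousOn
    (ε / 3) (by linarith)
  refine ⟨aeval b p - aeval a p, aux_aeval_sub_compact a b hab p, ?_⟩
  have key : ∀ (c : H →L[ℂ] H), IsSelfAdjoint c → spectrum ℝ c ⊆ Set.Icc (-M) M →
      ‖cfc f c - aeval c p‖ ≤ ε / 3 := by
    intro c hc hcs
    rw [← cfc_polynomial p c hc, ← cfc_sub f p.eval c]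
    refine norm_cfc_le (by linarith) fun x hx => ?_
    have := hp x (hcs hx)
    rw [Real.norm_eq_abs]
    calc |f x - p.eval x| = |p.eval x - f x| := abs_sub_comm _ _
      _ ≤ ε / 3 := (this).le
  have hda := key a ha hspec_a
  have hdb := key b hb hspec_b
  rw [dist_eq_norm]
  have heq : (cfc f b - cfc f a) - (aeval b p - aeval a p)
      = (cfc f b - aeval b p) - (cfc f a - aeval a p) := by abel
  rw [heq]
  calc ‖(cfc f b - aeval b p) - (cfc f a - aeval a p)‖
      ≤ ‖cfc f b - aeval b p‖ + ‖cfc f a - aeval a p‖ := norm_sub_le _ _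
    _ ≤ ε / 3 + ε / 3 := add_le_add hdb hda
    _ < ε := by linarith
end

section
/- Let H be a complex Hilbert space and let a, b be bounded self-adjoint operators on H such that b − a is a compact operator, and assume that a and b are both invertible. Let χ : ℝ → ℝ be the indicator function of the interval (0, ∞); since 0 lies in neither spectrum, χ is continuous on the spectra of a and of b, so the positive spectral projections P₊(a) := cfc χ a and P₊(b) := cfc χ b are defined by the continuous functional calculus. Then P₊(b) − P₊(a) is a compact operator. -/
/-!
For compact `b - a`, the difference `p(b) - p(a)` is compact for every polynomial `p`, because
compact operators form a two-sided ideal and `b^(n+1) - a^(n+1) = b (b^n - a^n) + (b - a) a^n`.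
Compact operators are norm-closed and the functional calculus is continuous under uniform
convergence on the spectrum, so Stone–Weierstrass on the compact set `σ(a) ∪ σ(b)` extends this to
every `f` continuous there. Invertibility keeps `0` out of `σ(a) ∪ σ(b)`, and away from `0` the
indicator of `(0, ∞)` is locally constant, hence continuous.
-/
open Polynomial Filter Topology Set

section
variable {𝕜 E : Type*} [NontriviallyNormedField 𝕜] [NormedAddCommGroup E] [NormedSpace 𝕜 E]

theorem IsCompactOperator.pow_sub_pow {a b : E →L[𝕜] E} (hab : IsCompactOperator (b - a))
    (n : ℕ) : IsCompactOperator (b ^ n - a ^ n) := by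
  induction n with
  | zero => simpa using isCompactOperator_zero
  | succ n ih =>
    have h : b ^ (n + 1) - a ^ (n + 1) = b * (b ^ n - a ^ n) + (b - a) * a ^ n := by
      rw [pow_succ', pow_succ', mul_sub, sub_mul]; abel
    rw [h]
    exact (ih.clm_comp b).add (hab.comp_clm _)

theorem IsCompactOperator.aeval_sub_aeval {R : Type*} [CommSemiring R] [Algebra R (E →L[𝕜] E)]
    {a b : E →L[𝕜] E} (hab : IsCompactOperator (b - a)) (p : R[X]) :
    IsCompactOperator (aeval b p - aeval a p) := by
  induction p using Polynomial.induction_on' with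
  | add p q hp hq =>
    rw [map_add, map_add, add_sub_add_comm]
    exact hp.add hq
  | monomial n r =>
    rw [aeval_monomial, aeval_monomial, ← mul_sub]
    exact (hab.pow_sub_pow n).clm_comp _
end

theorem continuousOn_indicator_Ioi_compl {α β : Type*} [LinearOrder α] [TopologicalSpace α]
    [OrderTopology α] [TopologicalSpace β] [Zero β] (a : α) (c : β) :
    ContinuousOn ((Ioi a).indicator fun _ ↦ c) {a}ᶜ := by
  refine isOpen_compl_singleton.continuousOn_iff.mpr fun x hx ↦ ?_
  rcases lt_or_gt_of_ne hx with hxa | hax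
  · refine (continuousAt_const (y := (0 : β))).congr ?_
    filter_upwards [Iio_mem_nhds hxa] with y hy
    exact (indicator_of_notMem (not_lt.mpr hy.le) _).symm
  · refine (continuousAt_const (y := c)).congr ?_
    filter_upwards [Ioi_mem_nhds hax] with y hy
    exact (indicator_of_mem hy fun _ ↦ c).symm

theorem exists_seq_polynomial_tendstoUniformlyOn {s : Set ℝ} (hs : IsCompact s) {f : ℝ → ℝ}
    (hf : ContinuousOn f s) :
    ∃ p : ℕ → ℝ[X], TendstoUniformlyOn (fun n x ↦ (p n).eval x) f atTop s := by
  have := isCompact_iff_compactSpace.mp hs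
  have hmem : (⟨s.domRestrict f, hf.domRestrict⟩ : C(s, ℝ)) ∈
      closure (polynomialFunctions s : Set C(s, ℝ)) := by
    rw [← Subalgebra.topologicalClosure_coe, polynomialFunctions.topologicalClosure]
    trivial
  obtain ⟨q, hq, hlim⟩ := mem_closure_iff_seq_limit.mp hmem
  simp only [polynomialFunctions_coe, mem_range] at hq
  choose p hp using hq
  refine ⟨p, tendstoUniformlyOn_iff_tendstoUniformly_comp_coe.mpr ?_⟩
  obtain rfl : q = fun n ↦ toContinuousMapOnAlgHom s (p n) := funext fun n ↦ (hp n).symm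
  exact ContinuousMap.tendsto_iff_tendstoUniformly.mp hlim

theorem IsCompactOperator.cfc_sub_cfc {H : Type*} [NormedAddCommGroup H] [InnerProductSpace ℂ H]
    [CompleteSpace H] {a b : H →L[ℂ] H} (ha : IsSelfAdjoint a)
    (hb : IsSelfAdjoint b) (hab : IsCompactOperator (b - a)) {f : ℝ → ℝ}
    (hf : ContinuousOn f (spectrum ℝ a ∪ spectrum ℝ b)) :
    IsCompactOperator (cfc f b - cfc f a) := by
  obtain ⟨p, hp⟩ := exists_seq_polynomial_tendstoUniformlyOn
    ((spectrum.isCompact a).union (spectrum.isCompact b)) hf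
  have hlim : ∀ c : H →L[ℂ] H, IsSelfAdjoint c → spectrum ℝ c ⊆ spectrum ℝ a ∪ spectrum ℝ b →
      Tendsto (fun n ↦ aeval c (p n)) atTop (𝓝 (cfc f c)) := fun c hc hsub ↦
    (tendsto_cfc_fun (hp.mono hsub) (.of_forall fun n ↦ (p n).continuous.continuousOn)).congr
      fun n ↦ cfc_polynomial (p n) c hc
  exact isCompactOperator_of_tendsto
    ((hlim b hb subset_union_right).sub (hlim a ha subset_union_left))
    (.of_forall fun n ↦ hab.aeval_sub_aeval (p n))

/-- **Corollary A.10 (bounded-operator case).** Let `a` and `b` be invertible bounded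
self-adjoint operators on a complex Hilbert space with `b − a` compact.  Then the difference of
positive spectral projections `P₊(b) − P₊(a)` is compact, where `P₊(x) = cfc χ x` with `χ` the
indicator function of `(0, ∞)`. -/
theorem positive_spectral_projection_difference_compact
    {H : Type*} [NormedAddCommGroup H] [InnerProductSpace ℂ H] [CompleteSpace H]
    (a b : H →L[ℂ] H) (ha : IsSelfAdjoint a) (hb : IsSelfAdjoint b)
    (ha' : IsUnit a) (hb' : IsUnit b)
    (hab : IsCompactOperator (b - a)) :
    IsCompactOperator
      (cfc ((Set.Ioi (0 : ℝ)).indicator fun _ => (1 : ℝ)) b -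
        cfc ((Set.Ioi (0 : ℝ)).indicator fun _ => (1 : ℝ)) a) := by
  have h0 : (0 : ℝ) ∉ spectrum ℝ a ∪ spectrum ℝ b := by
    rintro (h | h)
    exacts [(spectrum.zero_notMem_iff ℝ).mpr ha' h, (spectrum.zero_notMem_iff ℝ).mpr hb' h]
  refine hab.cfc_sub_cfc ha hb ((continuousOn_indicator_Ioi_compl 0 1).mono ?_)
  exact fun x hx (hx0 : x = 0) ↦ h0 (hx0 ▸ hx)
end
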